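/- In the additive setting below with ρ = ρ_max: if y₀ ∈ Ch(ℬ) and x₀ ∈ Ch(𝒜) satisfy I¹_{y₀} ∩ Ch(𝒜) = {x₀}, then |Tf(y₀)| = |f(x₀)| for every f ∈ A. -/

import Mathlib

/-!
Since `ρ_max(f, f) = φ(‖f‖, ‖f‖)` and `φ` is strictly increasing on the diagonal, `T` preserves
norms. Everything else is one peaking argument: if `|u(z₀)| < a`, pair `u` with a function of
height `b` peaking sharply at `z₀`; then `ρ_max` of the pair stays strictly below
`max(φ(a, b), φ(b, a))`, whereas on the other side of `T` the pair is evaluated at a point where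
the moduli are `a` and at least `b`. Applied first to height-one peaks at `y₀` (whose preimages
peak at `x₀` because `x₀ ∈ I¹_{y₀}`), this gives `|Tk(y₀)| = ‖k‖` for `k` peaking at `x₀`; with
scaled peaks at `x₀` it then gives `|Tf(y₀)| ≤ |f(x₀)|`, and with scaled peaks at `y₀` the
reverse inequality.
-/

open scoped ZeroAtInfty Pointwise
open Filter Topology

set_option maxHeartbeats 1000000
set_option synthInstance.maxHeartbeats 1000000

/-- The (inc) property for a two-variable function `φ : ℂ → ℂ → ℝ`. -/
def IncProp (φ : ℂ → ℂ → ℝ) : Prop :=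
  (∀ s₁ s₂ t : ℂ, ‖s₁‖ ≤ ‖s₂‖ →
      φ s₁ t ≤ φ s₂ t ∧ φ t s₁ ≤ φ t s₂) ∧
  (∀ s₁ s₂ t : ℂ, ‖s₁‖ < ‖s₂‖ → t ≠ 0 →
      φ s₁ t < φ s₂ t ∧ φ t s₁ < φ t s₂)

/-- The (con) property. -/
def ConProp (φ : ℂ → ℂ → ℝ) : Prop :=
  ∀ (n : ℕ), 0 < n → ∀ (s : Fin n → ℂ) (t : ℂ),
    φ ((1 / (n : ℂ)) * ∑ i, s i) t ≤ (1 / (n : ℝ)) * ∑ i, φ (s i) t ∧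
    φ t ((1 / (n : ℂ)) * ∑ i, s i) ≤ (1 / (n : ℝ)) * ∑ i, φ t (s i)

/-- sup of φ(f,g) over the space (the supremum norm of the nonnegative function φ(f,g)). -/
noncomputable def supPhi {X : Type*} (φ : ℂ → ℂ → ℝ) (f g : X → ℂ) : ℝ :=
  ⨆ x, φ (f x) (g x)

noncomputable def rhoPlus {X : Type*} (φ : ℂ → ℂ → ℝ) (f g : X → ℂ) : ℝ :=
  supPhi φ f g + supPhi φ g f

noncomputable def rhoMax {X : Type*} (φ : ℂ → ℂ → ℝ) (f g : X → ℂ) : ℝ :=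
  max (supPhi φ f g) (supPhi φ g f)

noncomputable def rhoPlusScalar (φ : ℂ → ℂ → ℝ) (r s : ℂ) : ℝ := φ r s + φ s r

noncomputable def rhoMaxScalar (φ : ℂ → ℂ → ℝ) (r s : ℂ) : ℝ := max (φ r s) (φ s r)

/-- Generic ρ, with a Boolean selecting between ρ₊ (true) and ρ_max (false). -/
noncomputable def rhoGen {X : Type*} (c : Bool) (φ : ℂ → ℂ → ℝ) (f g : X → ℂ) : ℝ :=
  if c then rhoPlus φ f g else rhoMax φ f g

noncomputable def rhoGenScalar (c : Bool) (φ : ℂ → ℂ → ℝ) (r s : ℂ) : ℝ :=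
  if c then rhoPlusScalar φ r s else rhoMaxScalar φ r s

/-- `x₀` is a strong boundary point of `A ⊆ C₀(X)`. -/
def IsStrongBoundaryPoint {X : Type*} [TopologicalSpace X]
    (A : Set C₀(X, ℂ)) (x₀ : X) : Prop :=
  ∀ ε > (0 : ℝ), ∀ V ∈ 𝓝 x₀, ∃ f ∈ A, f x₀ = 1 ∧ ‖f‖ = 1 ∧
    ∀ x ∉ V, ‖f x‖ < ε

/-- V_{x₀}(A). -/
def Vset {X : Type*} [TopologicalSpace X] (A : Set C₀(X, ℂ)) (x₀ : X) : Set C₀(X, ℂ) :=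
  {f ∈ A | f x₀ = 1 ∧ ‖f‖ = 1}

/-- F_{x₀}(A). -/
def Fset {X : Type*} [TopologicalSpace X] (A : Set C₀(X, ℂ)) (x₀ : X) : Set C₀(X, ℂ) :=
  {f ∈ A | ‖f x₀‖ = 1 ∧ ‖f‖ = 1}

/-- The maximum modulus set M(f). -/
def maxSet {X : Type*} [TopologicalSpace X] (f : C₀(X, ℂ)) : Set X :=
  {x | ‖f x‖ = ‖f‖}

/-- Evaluation at a point, as a continuous linear functional on a subspace of C₀(X). -/
noncomputable def evalDual {X : Type*} [TopologicalSpace X]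
    (𝒜 : Submodule ℂ C₀(X, ℂ)) (x : X) : StrongDual ℂ 𝒜 :=
  LinearMap.mkContinuous (E := 𝒜)
    { toFun := fun f => (f : C₀(X, ℂ)) x
      map_add' := fun f g => rfl
      map_smul' := fun c f => rfl }
    1
    (fun f => by
      show ‖(f : C₀(X, ℂ)) x‖ ≤ 1 * ‖f‖
      rw [one_mul]
      exact ((f : C₀(X, ℂ)).toBCF.norm_coe_le_norm x).trans_eq
        ZeroAtInftyContinuousMap.norm_toBCF_eq_norm)

noncomputable instance strongDualSubmoduleSeminormed {X : Type*} [TopologicalSpace X]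
    (𝒜 : Submodule ℂ C₀(X, ℂ)) : SeminormedAddCommGroup (StrongDual ℂ 𝒜) :=
  @ContinuousLinearMap.toSeminormedAddCommGroup ℂ ℂ 𝒜 ℂ _ _ _ _ _ _ (RingHom.id ℂ) _

/-- `x` lies in the Choquet boundary of a subspace `𝒜` of `C₀(X)`: the evaluation functional is
an extreme point of the closed unit ball of the dual space. -/
def InChoquetBoundary {X : Type*} [TopologicalSpace X]
    (𝒜 : Submodule ℂ C₀(X, ℂ)) (x : X) : Prop :=
  evalDual 𝒜 x ∈
    Set.extremePoints ℝ (Metric.closedBall (0 : StrongDual ℂ 𝒜) 1)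

/-- A function algebra on `X`: a closed subalgebra of `C₀(X)` strongly separating points. -/
def IsFunctionAlgebra {X : Type*} [TopologicalSpace X]
    (𝒜 : NonUnitalSubalgebra ℂ C₀(X, ℂ)) : Prop :=
  IsClosed (𝒜 : Set C₀(X, ℂ)) ∧
  (∀ x y : X, x ≠ y → ∃ f ∈ 𝒜, f x ≠ f y) ∧
  (∀ x : X, ∃ g ∈ 𝒜, g x ≠ (0 : ℂ))

/-- `|A| ⊆ |𝒜|`. -/
def ModulusSubset {X : Type*} [TopologicalSpace X]
    (A 𝒜 : Set C₀(X, ℂ)) : Prop :=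
  ∀ f ∈ A, ∃ g ∈ 𝒜, ∀ x, ‖f x‖ = ‖g x‖

/-- The positive elements of a subset `S` of `C₀(X)`. -/
def posPartSet {X : Type*} [TopologicalSpace X] (S : Set C₀(X, ℂ)) : Set C₀(X, ℂ) :=
  {f ∈ S | ∀ x, ∃ r : ℝ, 0 ≤ r ∧ f x = r}

theorem ZeroAtInftyContinuousMap.norm_apply_le {Z : Type*} [TopologicalSpace Z]
    (f : C₀(Z, ℂ)) (z : Z) : ‖f z‖ ≤ ‖f‖ :=
  f.toBCF.norm_coe_le_norm z

theorem ZeroAtInftyContinuousMap.exists_lt_norm_apply {Z : Type*} [TopologicalSpace Z]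
    {f : C₀(Z, ℂ)} {c : ℝ} (hc : 0 ≤ c) (h : c < ‖f‖) : ∃ z, c < ‖f z‖ := by
  by_contra! hle
  exact h.not_ge ((f.toBCF.norm_le hc).mpr hle)

theorem rhoMaxScalar_comm (φ : ℂ → ℂ → ℝ) (s t : ℂ) :
    rhoMaxScalar φ s t = rhoMaxScalar φ t s :=
  max_comm _ _

theorem rhoMax_le_of_forall {Z : Type*} [TopologicalSpace Z] [Nonempty Z] {φ : ℂ → ℂ → ℝ}
    {u v : C₀(Z, ℂ)} {K : ℝ} (h : ∀ z, rhoMaxScalar φ (u z) (v z) ≤ K) :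
    rhoMax φ ⇑u ⇑v ≤ K :=
  max_le (ciSup_le fun z => (le_max_left _ _).trans (h z))
    (ciSup_le fun z => (le_max_right _ _).trans (h z))

theorem ofReal_smul_mem_posPartSet {X : Type*} [TopologicalSpace X]
    {S : Submodule ℂ C₀(X, ℂ)} {c : ℝ} (hc : 0 ≤ c) {f : C₀(X, ℂ)}
    (hf : f ∈ posPartSet (S : Set C₀(X, ℂ))) : (c : ℂ) • f ∈ posPartSet (S : Set C₀(X, ℂ)) := by
  refine ⟨S.smul_mem _ hf.1, fun x => ?_⟩
  obtain ⟨r, hr, hfx⟩ := hf.2 x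
  exact ⟨c * r, mul_nonneg hc hr, by simp [hfx]⟩

theorem ofReal_smul_mem_of_submodule_or_posPartSet {X : Type*} [TopologicalSpace X]
    {A : Set C₀(X, ℂ)}
    (hA : (∃ S : Submodule ℂ C₀(X, ℂ), A = (S : Set C₀(X, ℂ))) ∨
      (∃ S : Submodule ℂ C₀(X, ℂ), A = posPartSet (S : Set C₀(X, ℂ)))) :
    ∀ c : ℝ, 0 ≤ c → ∀ f ∈ A, (c : ℂ) • f ∈ A := by
  intro c hc f hf
  rcases hA with ⟨S, rfl⟩ | ⟨S, rfl⟩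
  · exact S.smul_mem _ hf
  · exact ofReal_smul_mem_posPartSet hc hf

theorem IsStrongBoundaryPoint.exists_norm_eq {X : Type*} [TopologicalSpace X]
    {A : Set C₀(X, ℂ)} {x₀ : X} (hx₀ : IsStrongBoundaryPoint A x₀) {b : ℝ} (hb : 0 < b)
    (hA : ∀ f ∈ A, (b : ℂ) • f ∈ A) :
    ∀ ε > (0 : ℝ), ∀ V ∈ 𝓝 x₀, ∃ f ∈ A, ‖f x₀‖ = b ∧ ‖f‖ = b ∧ ∀ x ∉ V, ‖f x‖ < ε := by
  intro ε hε V hV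
  obtain ⟨f, hf, hfx, hfn, hfV⟩ := hx₀ (ε / b) (div_pos hε hb) V hV
  have hnorm_apply (x : X) : ‖((b : ℂ) • f) x‖ = b * ‖f x‖ := by
    simp [abs_of_pos hb]
  refine ⟨(b : ℂ) • f, hA f hf, by simp [hfx, hb.le], ?_, fun x hx => ?_⟩
  · rw [norm_smul, hfn, mul_one, Complex.norm_of_nonneg hb.le]
  · rw [hnorm_apply]
    calc b * ‖f x‖ < b * (ε / b) := mul_lt_mul_of_pos_left (hfV x hx) hb
      _ = ε := mul_div_cancel₀ ε hb.ne'

namespace IncProp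

variable {φ : ℂ → ℂ → ℝ}

theorem mono (hφ : IncProp φ) {s s' t t' : ℂ} (hs : ‖s‖ ≤ ‖s'‖) (ht : ‖t‖ ≤ ‖t'‖) :
    φ s t ≤ φ s' t' :=
  (hφ.1 s s' t hs).1.trans (hφ.1 t t' s' ht).2

theorem lt_of_lt_of_le (hφ : IncProp φ) {s s' t t' : ℂ} (hs : ‖s‖ < ‖s'‖) (ht : ‖t‖ ≤ ‖t'‖)
    (ht' : t' ≠ 0) : φ s t < φ s' t' :=
  (hφ.1 t t' s ht).2.trans_lt (hφ.2 s s' t' hs ht').1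

theorem lt_of_le_of_lt (hφ : IncProp φ) {s s' t t' : ℂ} (hs : ‖s‖ ≤ ‖s'‖) (ht : ‖t‖ < ‖t'‖)
    (hs' : s' ≠ 0) : φ s t < φ s' t' :=
  (hφ.1 s s' t hs).1.trans_lt (hφ.2 t t' s' ht hs').2

theorem rhoMaxScalar_le (hφ : IncProp φ) {s s' t t' : ℂ} (hs : ‖s‖ ≤ ‖s'‖) (ht : ‖t‖ ≤ ‖t'‖) :
    rhoMaxScalar φ s t ≤ rhoMaxScalar φ s' t' :=
  max_le_max (hφ.mono hs ht) (hφ.mono ht hs)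

theorem rhoMaxScalar_lt_of_lt_of_le (hφ : IncProp φ) {s s' t t' : ℂ} (hs : ‖s‖ < ‖s'‖)
    (ht : ‖t‖ ≤ ‖t'‖) (ht' : t' ≠ 0) : rhoMaxScalar φ s t < rhoMaxScalar φ s' t' :=
  max_lt_max (hφ.lt_of_lt_of_le hs ht ht') (hφ.lt_of_le_of_lt ht hs ht')

theorem rhoMaxScalar_lt_of_le_of_lt (hφ : IncProp φ) {s s' t t' : ℂ} (hs : ‖s‖ ≤ ‖s'‖)
    (ht : ‖t‖ < ‖t'‖) (hs' : s' ≠ 0) : rhoMaxScalar φ s t < rhoMaxScalar φ s' t' :=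
  max_lt_max (hφ.lt_of_le_of_lt hs ht hs') (hφ.lt_of_lt_of_le ht hs hs')

variable {Z Z' : Type*} [TopologicalSpace Z] [TopologicalSpace Z']

theorem bddAbove_range (hφ : IncProp φ) (u v : C₀(Z, ℂ)) :
    BddAbove (Set.range fun z => φ (u z) (v z)) :=
  ⟨φ ‖u‖ ‖v‖, by
    rintro _ ⟨z, rfl⟩
    exact hφ.mono (by simpa using u.norm_apply_le z) (by simpa using v.norm_apply_le z)⟩

theorem rhoMaxScalar_le_rhoMax (hφ : IncProp φ) (u v : C₀(Z, ℂ)) (z : Z) :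
    rhoMaxScalar φ (u z) (v z) ≤ rhoMax φ ⇑u ⇑v :=
  max_le_max (le_ciSup (hφ.bddAbove_range u v) z) (le_ciSup (hφ.bddAbove_range v u) z)

theorem supPhi_self_lt (hφ : IncProp φ) [Nonempty Z] {u : C₀(Z, ℂ)} {v : C₀(Z', ℂ)}
    (h : ‖u‖ < ‖v‖) : supPhi φ ⇑u ⇑u < supPhi φ ⇑v ⇑v := by
  obtain ⟨z, hz⟩ := v.exists_lt_norm_apply (norm_nonneg u) h
  have hvz : v z ≠ 0 := norm_pos_iff.mp ((norm_nonneg u).trans_lt hz)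
  have hu (x : Z) : ‖u x‖ ≤ ‖(‖u‖ : ℂ)‖ := by simpa using u.norm_apply_le x
  calc supPhi φ ⇑u ⇑u ≤ φ ‖u‖ ‖u‖ := ciSup_le fun x => hφ.mono (hu x) (hu x)
    _ < φ (v z) (v z) := hφ.lt_of_lt_of_le (by simpa using hz) (by simpa using hz.le) hvz
    _ ≤ supPhi φ ⇑v ⇑v := le_ciSup (hφ.bddAbove_range v v) z

theorem norm_eq_of_rhoMax_self_eq (hφ : IncProp φ) [Nonempty Z] [Nonempty Z']
    {u : C₀(Z, ℂ)} {v : C₀(Z', ℂ)} (h : rhoMax φ ⇑u ⇑u = rhoMax φ ⇑v ⇑v) : ‖u‖ = ‖v‖ := by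
  simp only [rhoMax, max_self] at h
  exact le_antisymm (not_lt.mp fun hlt => (hφ.supPhi_self_lt hlt).ne h.symm)
    (not_lt.mp fun hlt => (hφ.supPhi_self_lt hlt).ne h)

theorem exists_nhds_rhoMax_lt (hφ : IncProp φ) {u : C₀(Z, ℂ)} {z₀ : Z} {a b : ℝ} (hb : 0 < b)
    (hu₀ : ‖u z₀‖ < a) (hu : ‖u‖ ≤ max a b) :
    ∃ W ∈ 𝓝 z₀, ∃ ε > (0 : ℝ), ∀ v : C₀(Z, ℂ), ‖v‖ ≤ b → (∀ z ∉ W, ‖v z‖ < ε) →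
      rhoMax φ ⇑u ⇑v < rhoMaxScalar φ a b := by
  have : Nonempty Z := ⟨z₀⟩
  have ha : 0 < a := (norm_nonneg _).trans_lt hu₀
  obtain ⟨m, hm₀, hma⟩ := exists_between hu₀
  have hm : 0 ≤ m := (norm_nonneg _).trans hm₀.le
  set ε := min a b / 2
  have hε : 0 < ε := by positivity
  have hεa : ε < a := (half_lt_self (lt_min ha hb)).trans_le (min_le_left a b)
  have hεb : ε < b := (half_lt_self (lt_min ha hb)).trans_le (min_le_right a b)
  have hb' : (b : ℂ) ≠ 0 := Complex.ofReal_ne_zero.mpr hb.ne'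
  have hin : rhoMaxScalar φ m b < rhoMaxScalar φ a b :=
    hφ.rhoMaxScalar_lt_of_lt_of_le (by simpa [abs_of_nonneg hm, abs_of_pos ha]) le_rfl hb'
  have hout : rhoMaxScalar φ (max a b : ℝ) ε < rhoMaxScalar φ a b := by
    rcases le_total b a with hab | hab
    · rw [max_eq_left hab]
      exact hφ.rhoMaxScalar_lt_of_le_of_lt le_rfl
        (by simpa [abs_of_pos hε, abs_of_pos hb]) (Complex.ofReal_ne_zero.mpr ha.ne')
    · rw [max_eq_right hab, rhoMaxScalar_comm φ a]
      exact hφ.rhoMaxScalar_lt_of_le_of_lt le_rfl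
        (by simpa [abs_of_pos hε, abs_of_pos ha]) hb'
  refine ⟨{z | ‖u z‖ < m}, (isOpen_lt (by fun_prop) continuous_const).mem_nhds hm₀, ε, hε,
    fun v hv hvW => (rhoMax_le_of_forall fun z => ?_).trans_lt (max_lt hin hout)⟩
  by_cases hz : ‖u z‖ < m
  · refine le_max_of_le_left (hφ.rhoMaxScalar_le ?_ ?_)
    · simpa [abs_of_nonneg hm] using hz.le
    · simpa [abs_of_pos hb] using (v.norm_apply_le z).trans hv
  · refine le_max_of_le_right (hφ.rhoMaxScalar_le ?_ ?_)
    · simpa [abs_of_pos (lt_max_of_lt_left ha)] using (u.norm_apply_le z).trans hu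
    · simpa [abs_of_pos hε] using (hvW z hz).le

theorem norm_apply_le_of_peak (hφ : IncProp φ) {u : C₀(Z, ℂ)} {u' : C₀(Z', ℂ)} {z₀ : Z}
    {z₀' : Z'} {b : ℝ} (hb : 0 < b) (hu : ‖u‖ ≤ max ‖u' z₀'‖ b)
    (hpeak : ∀ ε > (0 : ℝ), ∀ W ∈ 𝓝 z₀, ∃ v : C₀(Z, ℂ), ∃ v' : C₀(Z', ℂ), ‖v‖ ≤ b ∧
      (∀ z ∉ W, ‖v z‖ < ε) ∧ b ≤ ‖v' z₀'‖ ∧ rhoMax φ ⇑u' ⇑v' = rhoMax φ ⇑u ⇑v) :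
    ‖u' z₀'‖ ≤ ‖u z₀‖ := by
  by_contra! hlt
  obtain ⟨W, hW, ε, hε, hρ⟩ := hφ.exists_nhds_rhoMax_lt hb hlt hu
  obtain ⟨v, v', hv, hvW, hv', heq⟩ := hpeak ε hε W hW
  have hlow : rhoMaxScalar φ ‖u' z₀'‖ b ≤ rhoMax φ ⇑u' ⇑v' :=
    (hφ.rhoMaxScalar_le (by simp) (by simpa [abs_of_pos hb] using hv')).trans
      (hφ.rhoMaxScalar_le_rhoMax u' v' z₀')
  exact (hρ v hv hvW).not_ge (hlow.trans heq.le)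

end IncProp

section Isometry

variable {X Y : Type*} [TopologicalSpace X] [TopologicalSpace Y] {φ : ℂ → ℂ → ℝ}
  {A : Set C₀(X, ℂ)} {B : Set C₀(Y, ℂ)} {T : C₀(X, ℂ) → C₀(Y, ℂ)} {x₀ : X} {y₀ : Y}

theorem norm_map_eq [Nonempty X] [Nonempty Y] (hφ : IncProp φ)
    (hT : ∀ f ∈ A, ∀ g ∈ A, rhoMax φ (fun y => T f y) (fun y => T g y) =
      rhoMax φ (fun x => f x) (fun x => g x))
    {f : C₀(X, ℂ)} (hf : f ∈ A) : ‖T f‖ = ‖f‖ :=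
  hφ.norm_eq_of_rhoMax_self_eq (hT f hf f hf)

theorem norm_apply_le_norm_map_apply_of_norm_eq (hφ : IncProp φ)
    (hT : ∀ f ∈ A, ∀ g ∈ A, rhoMax φ (fun y => T f y) (fun y => T g y) =
      rhoMax φ (fun x => f x) (fun x => g x))
    (hTsurj : Set.SurjOn T A B) (hy₀ : IsStrongBoundaryPoint B y₀)
    (hI : x₀ ∈ ⋂ g ∈ {g : C₀(X, ℂ) | g ∈ A ∧ T g ∈ (1 : ℂ) • Vset B y₀}, maxSet g)
    {f : C₀(X, ℂ)} (hf : f ∈ A) (hfx : ‖f x₀‖ = ‖f‖) : ‖f x₀‖ ≤ ‖T f y₀‖ := by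
  have : Nonempty X := ⟨x₀⟩
  have : Nonempty Y := ⟨y₀⟩
  refine hφ.norm_apply_le_of_peak one_pos ?_ fun ε hε W hW => ?_
  · rw [norm_map_eq hφ hT hf, ← hfx]
    exact le_max_left _ _
  obtain ⟨h, hhB, hhy, hhn, hhW⟩ := hy₀ ε hε W hW
  obtain ⟨g, hg, rfl⟩ := hTsurj hhB
  have hgx : ‖g x₀‖ = ‖g‖ :=
    Set.mem_iInter₂.mp hI g ⟨hg, by rw [one_smul]; exact ⟨hhB, hhy, hhn⟩⟩
  refine ⟨T g, g, hhn.le, hhW, ?_, (hT f hf g hg).symm⟩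
  rw [hgx, ← norm_map_eq hφ hT hg, hhn]

theorem norm_map_apply_le (hφ : IncProp φ)
    (hT : ∀ f ∈ A, ∀ g ∈ A, rhoMax φ (fun y => T f y) (fun y => T g y) =
      rhoMax φ (fun x => f x) (fun x => g x))
    (hTsurj : Set.SurjOn T A B) (hA : ∀ c : ℝ, 0 < c → ∀ f ∈ A, (c : ℂ) • f ∈ A)
    (hx₀ : IsStrongBoundaryPoint A x₀) (hy₀ : IsStrongBoundaryPoint B y₀)
    (hI : x₀ ∈ ⋂ g ∈ {g : C₀(X, ℂ) | g ∈ A ∧ T g ∈ (1 : ℂ) • Vset B y₀}, maxSet g)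
    {f : C₀(X, ℂ)} (hf : f ∈ A) : ‖T f y₀‖ ≤ ‖f x₀‖ := by
  have hb : 0 < ‖f‖ + 1 := by positivity
  refine hφ.norm_apply_le_of_peak hb (le_max_of_le_right (by linarith)) fun ε hε W hW => ?_
  obtain ⟨k, hk, hkx, hkn, hkW⟩ := hx₀.exists_norm_eq hb (hA _ hb) ε hε W hW
  refine ⟨k, T k, hkn.le, hkW, ?_, hT f hf k hk⟩
  rw [← hkx]
  exact norm_apply_le_norm_map_apply_of_norm_eq hφ hT hTsurj hy₀ hI hk (hkx.trans hkn.symm)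

theorem norm_apply_le_norm_map_apply (hφ : IncProp φ)
    (hT : ∀ f ∈ A, ∀ g ∈ A, rhoMax φ (fun y => T f y) (fun y => T g y) =
      rhoMax φ (fun x => f x) (fun x => g x))
    (hTsurj : Set.SurjOn T A B) (hA : ∀ c : ℝ, 0 < c → ∀ f ∈ A, (c : ℂ) • f ∈ A)
    (hB : ∀ c : ℝ, 0 < c → ∀ h ∈ B, (c : ℂ) • h ∈ B)
    (hx₀ : IsStrongBoundaryPoint A x₀) (hy₀ : IsStrongBoundaryPoint B y₀)
    (hI : x₀ ∈ ⋂ g ∈ {g : C₀(X, ℂ) | g ∈ A ∧ T g ∈ (1 : ℂ) • Vset B y₀}, maxSet g)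
    {f : C₀(X, ℂ)} (hf : f ∈ A) : ‖f x₀‖ ≤ ‖T f y₀‖ := by
  have : Nonempty X := ⟨x₀⟩
  have : Nonempty Y := ⟨y₀⟩
  have hb : 0 < ‖f‖ + 1 := by positivity
  refine hφ.norm_apply_le_of_peak hb
    (le_max_of_le_right (by rw [norm_map_eq hφ hT hf]; linarith)) fun ε hε W hW => ?_
  obtain ⟨h, hh, hhy, hhn, hhW⟩ := hy₀.exists_norm_eq hb (hB _ hb) ε hε W hW
  obtain ⟨g, hg, rfl⟩ := hTsurj hh
  refine ⟨T g, g, hhn.le, hhW, ?_, (hT f hf g hg).symm⟩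
  rw [← hhy]
  exact norm_map_apply_le hφ hT hTsurj hA hx₀ hy₀ hI hg

end Isometry

theorem stmt12_general {X Y : Type*} [TopologicalSpace X] [TopologicalSpace Y]
    (φ : ℂ → ℂ → ℝ) (hinc : IncProp φ)
    (A : Set C₀(X, ℂ)) (B : Set C₀(Y, ℂ))
    (hA : (∃ S : Submodule ℂ C₀(X, ℂ), A = (S : Set C₀(X, ℂ))) ∨
          (∃ S : Submodule ℂ C₀(X, ℂ), A = posPartSet (S : Set C₀(X, ℂ))))
    (hB : (∃ S : Submodule ℂ C₀(Y, ℂ), B = (S : Set C₀(Y, ℂ))) ∨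
          (∃ S : Submodule ℂ C₀(Y, ℂ), B = posPartSet (S : Set C₀(Y, ℂ))))
    (𝒜 : NonUnitalSubalgebra ℂ C₀(X, ℂ)) (ℬ : NonUnitalSubalgebra ℂ C₀(Y, ℂ))
    (hbd𝒜 : ∀ x : X, IsStrongBoundaryPoint A x ↔ InChoquetBoundary 𝒜.toSubmodule x)
    (hbdℬ : ∀ y : Y, IsStrongBoundaryPoint B y ↔ InChoquetBoundary ℬ.toSubmodule y)
    (T : C₀(X, ℂ) → C₀(Y, ℂ)) (hTsurj : Set.SurjOn T A B)
    (hT : ∀ f ∈ A, ∀ g ∈ A,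
      rhoMax φ (fun y => T f y) (fun y => T g y) =
        rhoMax φ (fun x => f x) (fun x => g x))
    (y₀ : Y) (hy₀ : InChoquetBoundary ℬ.toSubmodule y₀)
    (x₀ : X) (hx₀ : InChoquetBoundary 𝒜.toSubmodule x₀)
    (hsingle : (⋂ f ∈ {f : C₀(X, ℂ) | f ∈ A ∧ T f ∈ (1 : ℂ) • Vset B y₀}, maxSet f) ∩ {x : X | InChoquetBoundary 𝒜.toSubmodule x} = {x₀}) :
    ∀ f ∈ A, ‖T f y₀‖ = ‖f x₀‖ := by
  intro f hf
  have hAsmul c (hc : 0 < c) := ofReal_smul_mem_of_submodule_or_posPartSet hA c hc.le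
  have hBsmul c (hc : 0 < c) := ofReal_smul_mem_of_submodule_or_posPartSet hB c hc.le
  have hx₀' := (hbd𝒜 x₀).mpr hx₀
  have hy₀' := (hbdℬ y₀).mpr hy₀
  have hI := (hsingle.ge (Set.mem_singleton x₀)).1
  exact le_antisymm (norm_map_apply_le hinc hT hTsurj hAsmul hx₀' hy₀' hI hf)
    (norm_apply_le_norm_map_apply hinc hT hTsurj hAsmul hBsmul hx₀' hy₀' hI hf)

theorem stmt12 {X Y : Type*} [TopologicalSpace X] [LocallyCompactSpace X] [T2Space X] [TopologicalSpace Y] [LocallyCompactSpace Y] [T2Space Y]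
    (φ : ℂ → ℂ → ℝ) (hφc : Continuous fun p : ℂ × ℂ => φ p.1 p.2)
    (hφ0 : ∀ s t : ℂ, 0 ≤ φ s t) (hinc : IncProp φ) (hcon : ConProp φ)
    (A : Set C₀(X, ℂ)) (B : Set C₀(Y, ℂ))
    (hA : (∃ S : Submodule ℂ C₀(X, ℂ), A = (S : Set C₀(X, ℂ))) ∨
          (∃ S : Submodule ℂ C₀(X, ℂ), A = posPartSet (S : Set C₀(X, ℂ))))
    (hB : (∃ S : Submodule ℂ C₀(Y, ℂ), B = (S : Set C₀(Y, ℂ))) ∨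
          (∃ S : Submodule ℂ C₀(Y, ℂ), B = posPartSet (S : Set C₀(Y, ℂ))))
    (𝒜 : NonUnitalSubalgebra ℂ C₀(X, ℂ)) (ℬ : NonUnitalSubalgebra ℂ C₀(Y, ℂ))
    (h𝒜 : IsFunctionAlgebra 𝒜) (hℬ : IsFunctionAlgebra ℬ)
    (hbd𝒜 : ∀ x : X, IsStrongBoundaryPoint A x ↔ InChoquetBoundary 𝒜.toSubmodule x)
    (hbdℬ : ∀ y : Y, IsStrongBoundaryPoint B y ↔ InChoquetBoundary ℬ.toSubmodule y)
    (hmodA : ModulusSubset A (𝒜 : Set C₀(X, ℂ)))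
    (hmodB : ModulusSubset B (ℬ : Set C₀(Y, ℂ)))
    (T : C₀(X, ℂ) → C₀(Y, ℂ)) (hTmaps : Set.MapsTo T A B) (hTsurj : Set.SurjOn T A B)
    (hT : ∀ f ∈ A, ∀ g ∈ A,
      rhoMax φ (fun y => T f y) (fun y => T g y) =
        rhoMax φ (fun x => f x) (fun x => g x))
    (y₀ : Y) (hy₀ : InChoquetBoundary ℬ.toSubmodule y₀)
    (x₀ : X) (hx₀ : InChoquetBoundary 𝒜.toSubmodule x₀)
    (hsingle : (⋂ f ∈ {f : C₀(X, ℂ) | f ∈ A ∧ T f ∈ (1 : ℂ) • Vset B y₀}, maxSet f) ∩ {x : X | InChoquetBoundary 𝒜.toSubmodule x} = {x₀}) :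
    ∀ f ∈ A, ‖T f y₀‖ = ‖f x₀‖ :=
  stmt12_general φ hinc A B hA hB 𝒜 ℬ hbd𝒜 hbdℬ T hTsurj hT y₀ hy₀ x₀ hx₀ hsingle
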